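/- Fix ρ ∈ (0,1). Define φ(z) = (1−2ρ)z³ + (ρ²+4ρ−1)z² − (2ρ²+2ρ+1)z + 2ρ for z ∈ [0, ρ]. Then φ is non-increasing on [0, ρ] and φ(z) ≥ φ(ρ) = (1−ρ)³ρ ≥ 0 for all z ∈ [0, ρ]. -/
import Mathlib


noncomputable def phi (ρ z : ℝ) : ℝ :=
  (1 - 2 * ρ) * z ^ 3 + (ρ ^ 2 + 4 * ρ - 1) * z ^ 2 - (2 * ρ ^ 2 + 2 * ρ + 1) * z + 2 * ρ

lemma phi_key (ρ x y : ℝ) (h0 : 0 < ρ) (h1 : ρ < 1) (hx : 0 ≤ x) (hxy : x ≤ y)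
    (hy : y ≤ ρ) : phi ρ y ≤ phi ρ x := by
  unfold phi
  have ha : (0:ℝ) ≤ x := hx
  have hb : (0:ℝ) ≤ y - x := by linarith
  have hc : (0:ℝ) ≤ ρ - y := by linarith
  have hd : (0:ℝ) ≤ 1 - ρ := by linarith
  nlinarith [mul_nonneg ha hb, mul_nonneg ha hc, mul_nonneg ha hd, mul_nonneg hb hc,
    mul_nonneg hb hd, mul_nonneg hc hd, mul_nonneg ha ha, mul_nonneg hb hb,
    mul_nonneg hc hc, mul_nonneg hd hd, mul_nonneg (mul_nonneg hb hc) hd,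
    mul_nonneg (mul_nonneg ha hc) hd, mul_nonneg (mul_nonneg ha hb) hc,
    mul_nonneg (mul_nonneg ha hb) hd]

/-- For `ρ ∈ (0,1)`, `φ` is non-increasing on `[0, ρ]` and
`φ(z) ≥ φ(ρ) = (1−ρ)³ρ ≥ 0` for all `z ∈ [0, ρ]`. -/
theorem stmt9 (ρ : ℝ) (hρ : ρ ∈ Set.Ioo (0 : ℝ) 1) :
    AntitoneOn (phi ρ) (Set.Icc 0 ρ) ∧
    (∀ z ∈ Set.Icc (0 : ℝ) ρ, phi ρ ρ ≤ phi ρ z) ∧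
    phi ρ ρ = (1 - ρ) ^ 3 * ρ ∧ 0 ≤ phi ρ ρ := by
  obtain ⟨h0, h1⟩ := hρ
  refine ⟨fun x hx y hy hxy => phi_key ρ x y h0 h1 hx.1 hxy hy.2,
    fun z hz => phi_key ρ z ρ h0 h1 hz.1 hz.2 le_rfl, ?_, ?_⟩
  · unfold phi; ring
  · unfold phi
    nlinarith [mul_nonneg (mul_nonneg (sub_nonneg.2 h1.le) (sub_nonneg.2 h1.le)) (mul_nonneg (sub_nonneg.2 h1.le) h0.le)]
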